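/- Big-step evaluation is a setoid predicate: if (s, σ) ⇒ r and r ≅ r', then (s, σ) ⇒ r'; and if (s, r) ⇒* r₁, r ≅ r₀ and r₁ ≅ r₁', then (s, r₀) ⇒* r₁'. -/

import Mathlib

/-! Core definitions: delayful resumptions as an M-type, strong bisimilarity,
convergence, divergence, responsiveness, committedness, weak bisimilarities. -/

abbrev state := String → ℤ

/-- Shapes of the polynomial functor for delayful resumptions. -/
inductive RShape where
  | ret (σ : state)
  | inp
  | out (v : ℤ)
  | delay

/-- The polynomial functor X ↦ state ⊕ (ℤ → X) ⊕ (ℤ × X) ⊕ X. -/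
def ResPF : PFunctor :=
  ⟨RShape, fun s => match s with
    | .ret _ => PEmpty
    | .inp => ℤ
    | .out _ => PUnit
    | .delay => PUnit⟩

/-- Delayful resumptions: the final coalgebra (M-type) of `ResPF`. -/
def Res : Type := ResPF.M

namespace Res

def ret (σ : state) : Res := PFunctor.M.mk ⟨RShape.ret σ, PEmpty.elim⟩

def inp (f : ℤ → Res) : Res := PFunctor.M.mk ⟨RShape.inp, f⟩

def out (v : ℤ) (r : Res) : Res := PFunctor.M.mk ⟨RShape.out v, fun _ => r⟩

def delay (r : Res) : Res := PFunctor.M.mk ⟨RShape.delay, fun _ => r⟩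

/-- The silently diverging resumption ⊥, satisfying ⊥ = δ ⊥. -/
def bot : Res := PFunctor.M.corec (fun _ : Unit => ⟨RShape.delay, fun _ => ()⟩) ()

end Res

/-- One step of strong bisimilarity. -/
def BisimF (R : Res → Res → Prop) (r r₁ : Res) : Prop :=
  (∃ σ, r = Res.ret σ ∧ r₁ = Res.ret σ) ∨
  (∃ f f₁, r = Res.inp f ∧ r₁ = Res.inp f₁ ∧ ∀ v, R (f v) (f₁ v)) ∨
  (∃ v a a₁, r = Res.out v a ∧ r₁ = Res.out v a₁ ∧ R a a₁) ∨
  (∃ a a₁, r = Res.delay a ∧ r₁ = Res.delay a₁ ∧ R a a₁)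

/-- Strong bisimilarity ≅: the greatest relation closed under `BisimF`. -/
def Bisim (r r₁ : Res) : Prop :=
  ∃ R : Res → Res → Prop, (∀ x y, R x y → BisimF R x y) ∧ R r r₁

/-- Convergence r ⇓ r': r converges in finitely many delay steps to a
resumption that has terminated or performs an observable action. -/
inductive Conv : Res → Res → Prop where
  | ret (σ : state) : Conv (Res.ret σ) (Res.ret σ)
  | inp {f f₁ : ℤ → Res} : (∀ v, Bisim (f v) (f₁ v)) → Conv (Res.inp f) (Res.inp f₁)
  | out {v : ℤ} {r r₁ : Res} : Bisim r r₁ → Conv (Res.out v r) (Res.out v r₁)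
  | delay {r r' : Res} : Conv r r' → Conv (Res.delay r) r'

/-- Divergence r ⇑: r silently diverges (greatest predicate with δ r ⇑ whenever r ⇑). -/
def Diverge (r : Res) : Prop :=
  ∃ P : Res → Prop, (∀ x, P x → ∃ x', x = Res.delay x' ∧ P x') ∧ P r

/-- One step of responsiveness. -/
def RespF (P : Res → Prop) (r : Res) : Prop :=
  (∃ σ, Conv r (Res.ret σ)) ∨
  (∃ f, Conv r (Res.inp f) ∧ ∀ v, P (f v)) ∨
  (∃ v r', Conv r (Res.out v r') ∧ P r')

/-- Responsiveness ↓↓ r: the greatest predicate closed under `RespF`. -/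
def Resp (r : Res) : Prop :=
  ∃ P : Res → Prop, (∀ x, P x → RespF P x) ∧ P r

/-- One step of committedness: responsiveness with a divergence option. -/
def CommF (P : Res → Prop) (r : Res) : Prop :=
  (∃ σ, Conv r (Res.ret σ)) ∨
  (∃ f, Conv r (Res.inp f) ∧ ∀ v, P (f v)) ∨
  (∃ v r', Conv r (Res.out v r') ∧ P r') ∨
  Diverge r

/-- Committedness ⇕ r: the greatest predicate closed under `CommF`. -/
def Comm (r : Res) : Prop :=
  ∃ P : Res → Prop, (∀ x, P x → CommF P x) ∧ P r

/-- One step of (termination-sensitive) weak bisimilarity. -/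
def WBisimF (R : Res → Res → Prop) (r r₁ : Res) : Prop :=
  (∃ σ, Conv r (Res.ret σ) ∧ Conv r₁ (Res.ret σ)) ∨
  (∃ f f₁, Conv r (Res.inp f) ∧ Conv r₁ (Res.inp f₁) ∧ ∀ v, R (f v) (f₁ v)) ∨
  (∃ v a a₁, Conv r (Res.out v a) ∧ Conv r₁ (Res.out v a₁) ∧ R a a₁) ∨
  (∃ a a₁, r = Res.delay a ∧ r₁ = Res.delay a₁ ∧ R a a₁)

/-- Weak bisimilarity ≈: the greatest relation closed under `WBisimF`. -/
def WBisim (r r₁ : Res) : Prop :=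
  ∃ R : Res → Res → Prop, (∀ x y, R x y → WBisimF R x y) ∧ R r r₁

/-- The inductive part ≈↓(X) of the second formulation of weak bisimilarity. -/
inductive WBisimI (X : Res → Res → Prop) : Res → Res → Prop where
  | ret (σ : state) : WBisimI X (Res.ret σ) (Res.ret σ)
  | out {v r r₁} : X r r₁ → WBisimI X (Res.out v r) (Res.out v r₁)
  | inp {f f₁} : (∀ v, X (f v) (f₁ v)) → WBisimI X (Res.inp f) (Res.inp f₁)
  | delayL {r r₁} : WBisimI X r r₁ → WBisimI X (Res.delay r) r₁
  | delayR {r r₁} : WBisimI X r r₁ → WBisimI X r (Res.delay r₁)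

/-- One step of the second (Mendler-style) formulation ≈° of weak bisimilarity. -/
def WBisimOF (R : Res → Res → Prop) (r r₁ : Res) : Prop :=
  (∃ X : Res → Res → Prop, (∀ x y, X x y → R x y) ∧ WBisimI X r r₁) ∨
  (∃ a a₁, r = Res.delay a ∧ r₁ = Res.delay a₁ ∧ R a a₁)

/-- The second formulation ≈° of weak bisimilarity (induction nested into coinduction). -/
def WBisimO (r r₁ : Res) : Prop :=
  ∃ R : Res → Res → Prop, (∀ x y, R x y → WBisimOF R x y) ∧ R r r₁

/-- One step of classical-style weak bisimilarity. -/
def WBisimClF (R : Res → Res → Prop) (r r₁ : Res) : Prop :=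
  (∃ σ, Conv r (Res.ret σ) ∧ Conv r₁ (Res.ret σ)) ∨
  (∃ v a a₁, Conv r (Res.out v a) ∧ Conv r₁ (Res.out v a₁) ∧ R a a₁) ∨
  (∃ f f₁, Conv r (Res.inp f) ∧ Conv r₁ (Res.inp f₁) ∧ ∀ v, R (f v) (f₁ v)) ∨
  (Diverge r ∧ Diverge r₁)

/-- Classical-style weak bisimilarity ≈c. -/
def WBisimCl (r r₁ : Res) : Prop :=
  ∃ R : Res → Res → Prop, (∀ x y, R x y → WBisimClF R x y) ∧ R r r₁

/-! The While language with interactive I/O, big-step and small-step semantics. -/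

/-- Pure expressions, given by their evaluation function. -/
abbrev Expr := state → ℤ

/-- State update σ[x↦v]. -/
def update (σ : state) (x : String) (v : ℤ) : state :=
  fun y => if y = x then v else σ y

/-- Statements of While with interactive I/O. -/
inductive Stmt where
  | skip
  | seq (s₀ s₁ : Stmt)
  | assign (x : String) (e : Expr)
  | ifte (e : Expr) (st sf : Stmt)
  | while (e : Expr) (st : Stmt)
  | input (x : String)
  | output (e : Expr)

/-- One step of big-step (delayful) evaluation (s, σ) ⇒ r, parameterized by
the evaluation relation `E` and the extended evaluation relation `Es`. -/
def EvalF (E : Stmt → state → Res → Prop) (Es : Stmt → Res → Res → Prop)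
    (s : Stmt) (σ : state) (r : Res) : Prop :=
  (s = .skip ∧ r = Res.ret σ) ∨
  (∃ x e, s = .assign x e ∧ r = Res.delay (Res.ret (update σ x (e σ)))) ∨
  (∃ s₀ s₁ r₀, s = .seq s₀ s₁ ∧ E s₀ σ r₀ ∧ Es s₁ r₀ r) ∨
  (∃ e st sf, s = .ifte e st sf ∧ e σ ≠ 0 ∧ Es st (Res.delay (Res.ret σ)) r) ∨
  (∃ e st sf, s = .ifte e st sf ∧ e σ = 0 ∧ Es sf (Res.delay (Res.ret σ)) r) ∨
  (∃ e st r₀, s = .while e st ∧ e σ ≠ 0 ∧ Es st (Res.delay (Res.ret σ)) r₀ ∧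
    Es (.while e st) r₀ r) ∨
  (∃ e st, s = .while e st ∧ e σ = 0 ∧ r = Res.delay (Res.ret σ)) ∨
  (∃ x, s = .input x ∧ r = Res.inp (fun v => Res.ret (update σ x v))) ∨
  (∃ e, s = .output e ∧ r = Res.out (e σ) (Res.ret σ))

/-- One step of extended evaluation (s, r) ⇒* r'. -/
def EvalSeqF (E : Stmt → state → Res → Prop) (Es : Stmt → Res → Res → Prop)
    (s : Stmt) (r r' : Res) : Prop :=
  (∃ σ, r = Res.ret σ ∧ E s σ r') ∨
  (∃ f f', r = Res.inp f ∧ r' = Res.inp f' ∧ ∀ v, Es s (f v) (f' v)) ∨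
  (∃ v a a', r = Res.out v a ∧ r' = Res.out v a' ∧ Es s a a') ∨
  (∃ a a', r = Res.delay a ∧ r' = Res.delay a' ∧ Es s a a')

/-- Big-step (delayful) evaluation (s, σ) ⇒ r, defined mutually coinductively
with extended evaluation as the greatest mutual fixed point. -/
def Eval (s : Stmt) (σ : state) (r : Res) : Prop :=
  ∃ (E : Stmt → state → Res → Prop) (Es : Stmt → Res → Res → Prop),
    (∀ s σ r, E s σ r → EvalF E Es s σ r) ∧
    (∀ s r r', Es s r r' → EvalSeqF E Es s r r') ∧ E s σ r

/-- Extended evaluation (s, r) ⇒* r'. -/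
def EvalSeq (s : Stmt) (r r' : Res) : Prop :=
  ∃ (E : Stmt → state → Res → Prop) (Es : Stmt → Res → Res → Prop),
    (∀ s σ r, E s σ r → EvalF E Es s σ r) ∧
    (∀ s r r', Es s r r' → EvalSeqF E Es s r r') ∧ Es s r r'

/-- Labelled configurations. -/
inductive LConf where
  | ret (σ : state)
  | inp (s : Stmt) (g : ℤ → state)
  | out (v : ℤ) (s : Stmt) (σ : state)
  | delay (s : Stmt) (σ : state)

/-- Terminality/one-step reduction (s, σ) → c. -/
inductive Step : Stmt → state → LConf → Prop where
  | skip {σ} : Step .skip σ (.ret σ)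
  | assign {x e σ} : Step (.assign x e) σ (.delay .skip (update σ x (e σ)))
  | seqRet {s₀ s₁ σ σ' c} : Step s₀ σ (.ret σ') → Step s₁ σ' c → Step (.seq s₀ s₁) σ c
  | seqInp {s₀ s₁ σ s₀' g} : Step s₀ σ (.inp s₀' g) →
      Step (.seq s₀ s₁) σ (.inp (.seq s₀' s₁) g)
  | seqOut  {s₀ s₁ σ v s₀' σ'} : Step s₀ σ (.out v s₀' σ') →
      Step (.seq s₀ s₁) σ (.out v (.seq s₀' s₁) σ')
  | seqDelay {s₀ s₁ σ s₀' σ'} : Step s₀ σ (.delay s₀' σ') →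
      Step (.seq s₀ s₁) σ (.delay (.seq s₀' s₁) σ')
  | ifTrue {e st sf σ} : e σ ≠ 0 → Step (.ifte e st sf) σ (.delay st σ)
  | ifFalse {e st sf σ} : e σ = 0 → Step (.ifte e st sf) σ (.delay sf σ)
  | whileTrue {e st σ} : e σ ≠ 0 →
      Step (.while e st) σ (.delay (.seq st (.while e st)) σ)
  | whileFalse {e st σ} : e σ = 0 → Step (.while e st) σ (.delay .skip σ)
  | input {x σ} : Step (.input x) σ (.inp .skip (fun v => update σ x v))
  | output {e σ} : Step (.output e) σ (.out (e σ) .skip σ)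

/-- Convergence of a configuration (s, σ) ⇓ c. -/
inductive ConfConv : Stmt → state → LConf → Prop where
  | ret {s σ σ'} : Step s σ (.ret σ') → ConfConv s σ (.ret σ')
  | inp {s σ s' g} : Step s σ (.inp s' g) → ConfConv s σ (.inp s' g)
  | out {s σ v s' σ'} : Step s σ (.out v s' σ') → ConfConv s σ (.out v s' σ')
  | delay {s σ s' σ' c} : Step s σ (.delay s' σ') → ConfConv s' σ' c → ConfConv s σ c

/-- One step of weak bisimilarity of configurations. -/
def ConfWBisimF (R : Stmt → state → Stmt → state → Prop)
    (s : Stmt) (σ : state) (s₁ : Stmt) (σ₁ : state) : Prop :=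
  (∃ σ', ConfConv s σ (.ret σ') ∧ ConfConv s₁ σ₁ (.ret σ')) ∨
  (∃ s' g s₁' g₁, ConfConv s σ (.inp s' g) ∧ ConfConv s₁ σ₁ (.inp s₁' g₁) ∧
    ∀ v, R s' (g v) s₁' (g₁ v)) ∨
  (∃ v s' σ' s₁' σ₁', ConfConv s σ (.out v s' σ') ∧ ConfConv s₁ σ₁ (.out v s₁' σ₁') ∧
    R s' σ' s₁' σ₁') ∨
  (∃ s' σ' s₁' σ₁', Step s σ (.delay s' σ') ∧ Step s₁ σ₁ (.delay s₁' σ₁') ∧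
    R s' σ' s₁' σ₁')

/-- Weak bisimilarity of configurations (s, σ) ≈ (s₁, σ₁). -/
def ConfWBisim (s : Stmt) (σ : state) (s₁ : Stmt) (σ₁ : state) : Prop :=
  ∃ R : Stmt → state → Stmt → state → Prop,
    (∀ a b a₁ b₁, R a b a₁ b₁ → ConfWBisimF R a b a₁ b₁) ∧ R s σ s₁ σ₁

/-- One step of small-step evaluation (s, σ) →∞ r. -/
def SmallEvalF (R : Stmt → state → Res → Prop) (s : Stmt) (σ : state) (r : Res) : Prop :=
  (∃ σ', Step s σ (.ret σ') ∧ r = Res.ret σ') ∨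
  (∃ s' σ' r₀, Step s σ (.delay s' σ') ∧ r = Res.delay r₀ ∧ R s' σ' r₀) ∨
  (∃ s' g f, Step s σ (.inp s' g) ∧ r = Res.inp f ∧ ∀ v, R s' (g v) (f v)) ∨
  (∃ v s' σ' r₀, Step s σ (.out v s' σ') ∧ r = Res.out v r₀ ∧ R s' σ' r₀)

/-- Small-step evaluation (s, σ) →∞ r: the terminal many-step reduction relation. -/
def SmallEval (s : Stmt) (σ : state) (r : Res) : Prop :=
  ∃ R : Stmt → state → Res → Prop,
    (∀ a b c, R a b c → SmallEvalF R a b c) ∧ R s σ r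

/-! Strong bisimilarity on the final coalgebra `Res` is equality, by the coinduction principle
of M-types, so every predicate on resumptions respects it. -/

theorem BisimF.dest_eq {R : Res → Res → Prop} {r r₁ : Res} (h : BisimF R r r₁) :
    ∃ a f f₁, PFunctor.M.dest r = ⟨a, f⟩ ∧ PFunctor.M.dest r₁ = ⟨a, f₁⟩ ∧
      ∀ i, R (f i) (f₁ i) := by
  rcases h with ⟨σ, rfl, rfl⟩ | ⟨f, f₁, rfl, rfl, hf⟩ | ⟨v, a, a₁, rfl, rfl, ha⟩ |
    ⟨a, a₁, rfl, rfl, ha⟩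
  · exact ⟨.ret σ, PEmpty.elim, PEmpty.elim, rfl, rfl, nofun⟩
  · exact ⟨.inp, f, f₁, rfl, rfl, hf⟩
  · exact ⟨.out v, fun _ => a, fun _ => a₁, rfl, rfl, fun _ => ha⟩
  · exact ⟨.delay, fun _ => a, fun _ => a₁, rfl, rfl, fun _ => ha⟩

theorem Bisim.eq {r r₁ : Res} (h : Bisim r r₁) : r = r₁ := by
  obtain ⟨R, hR, hr⟩ := h
  exact PFunctor.M.bisim R (fun x y hxy => (hR x y hxy).dest_eq) r r₁ hr

/-- Big-step evaluation and extended evaluation are setoid predicates. -/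
theorem eval_setoid :
    (∀ (s : Stmt) (σ : state) (r r' : Res), Eval s σ r → Bisim r r' → Eval s σ r') ∧
    (∀ (s : Stmt) (r r₀ r₁ r₁' : Res),
      EvalSeq s r r₁ → Bisim r r₀ → Bisim r₁ r₁' → EvalSeq s r₀ r₁') := by
  refine ⟨fun s σ r r' he hb => hb.eq ▸ he, fun s r r₀ r₁ r₁' he hb₀ hb₁ => ?_⟩
  rwa [← hb₀.eq, ← hb₁.eq]
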